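/- There is a constant c such that, for every formula F provable in CL5⁻ of length k, there exists a CL5⁻ proof of F using at most c·k⁶ applications of rules. -/

import Mathlib

namespace CirquentCalc

/-- Formulas: literals (negation applied only to atoms), ∧, ∨. -/
inductive Fml where
  | pos : ℕ → Fml
  | neg : ℕ → Fml
  | and : Fml → Fml → Fml
  | or : Fml → Fml → Fml
deriving DecidableEq

namespace Fml

/-- Negation (pushed to atoms, as ¬ applies only to atoms). -/
def negate : Fml → Fml
  | pos n => neg n
  | neg n => pos n
  | and a b => or a.negate b.negate
  | or a b => and a.negate b.negate

/-- Substitution extended homomorphically. -/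
def subst (σ : ℕ → Fml) : Fml → Fml
  | pos n => σ n
  | neg n => (σ n).negate
  | and a b => and (a.subst σ) (b.subst σ)
  | or a b => or (a.subst σ) (b.subst σ)

/-- Classical evaluation under a truth assignment. -/
def eval (v : ℕ → Bool) : Fml → Bool
  | pos n => v n
  | neg n => !(v n)
  | and a b => a.eval v && b.eval v
  | or a b => a.eval v || b.eval v

/-- Number of positive occurrences of atom `a`. -/
def cPos (a : ℕ) : Fml → ℕ
  | pos n => if n = a then 1 else 0
  | neg _ => 0
  | and f g => f.cPos a + g.cPos a
  | or f g => f.cPos a + g.cPos a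

/-- Number of negative occurrences of atom `a`. -/
def cNeg (a : ℕ) : Fml → ℕ
  | pos _ => 0
  | neg n => if n = a then 1 else 0
  | and f g => f.cNeg a + g.cNeg a
  | or f g => f.cNeg a + g.cNeg a

/-- Total number of positive occurrences of atoms. -/
def posOcc : Fml → ℕ
  | pos _ => 1
  | neg _ => 0
  | and f g => f.posOcc + g.posOcc
  | or f g => f.posOcc + g.posOcc

/-- Length: total number of occurrences of literals and connectives. -/
def len : Fml → ℕ
  | pos _ => 1
  | neg _ => 1
  | and f g => f.len + g.len + 1
  | or f g => f.len + g.len + 1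

/-- Number of occurrences of ∧. -/
def nAnd : Fml → ℕ
  | pos _ => 0
  | neg _ => 0
  | and f g => f.nAnd + g.nAnd + 1
  | or f g => f.nAnd + g.nAnd

/-- Number of occurrences of ∨. -/
def nOr : Fml → ℕ
  | pos _ => 0
  | neg _ => 0
  | and f g => f.nOr + g.nOr
  | or f g => f.nOr + g.nOr + 1

end Fml

def Tautology (A : Fml) : Prop := ∀ v, A.eval v = true

/-- No atom has more than two occurrences. -/
def Binary (A : Fml) : Prop := ∀ a, A.cPos a + A.cNeg a ≤ 2

/-- Whenever an atom occurs twice, one occurrence is positive and one negative. -/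
def Normal (A : Fml) : Prop := ∀ a, A.cPos a ≤ 1 ∧ A.cNeg a ≤ 1

def AtomicLevel (σ : ℕ → Fml) : Prop := ∀ n, ∃ m, σ n = Fml.pos m

/-- `F` is an instance of `B`: σ(B) = F for some substitution σ. -/
def InstanceOf (F B : Fml) : Prop := ∃ σ, B.subst σ = F

/-- `F` is an atomic-level instance of `B`. -/
def AtomicInstanceOf (F B : Fml) : Prop := ∃ σ, AtomicLevel σ ∧ B.subst σ = F

/-- A cirquent: a pool of (occurrences of) formulas, and a list of ogroups,
each an (index-)set of oformulas of the pool. -/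
structure Cirquent where
  pool : List Fml
  groups : List (Finset ℕ)

def emptyCirquent : Cirquent := ⟨[], []⟩

def idCirquent (F : Fml) : Cirquent := ⟨[F.negate, F], [{0, 1}]⟩

/-- The cirquent with pool ⟨F⟩ and one ogroup containing F. -/
def fmlCirquent (F : Fml) : Cirquent := ⟨[F], [{0}]⟩

/-- Index renaming swapping `i` and `i+1`. -/
def swapIdx (i : ℕ) : ℕ → ℕ := fun j => if j = i then i + 1 else if j = i + 1 then i else j

/-- Index renaming when a new oformula is inserted at position `i`. -/
def insShift (i : ℕ) : ℕ → ℕ := fun j => if j < i then j else j + 1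

/-- Index renaming when the oformulas at positions `i`, `i+1` are merged into one at `i`. -/
def mergeIdx (i : ℕ) : ℕ → ℕ := fun j => if j ≤ i then j else j - 1

/-- Mix: placing the two premise cirquents side by side. -/
def MixStep (A B C : Cirquent) : Prop :=
  C.pool = A.pool ++ B.pool ∧
  C.groups = A.groups ++ B.groups.map (Finset.image (· + A.pool.length))

/-- Oformula exchange: swap two adjacent oformulas, preserving containment. -/
def OfExchStep (P C : Cirquent) : Prop :=
  ∃ (l₁ l₂ : List Fml) (F G : Fml),
    P.pool = l₁ ++ F :: G :: l₂ ∧ C.pool = l₁ ++ G :: F :: l₂ ∧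
    C.groups = P.groups.map (Finset.image (swapIdx l₁.length))

/-- Ogroup exchange: swap two adjacent ogroups. -/
def OgExchStep (P C : Cirquent) : Prop :=
  C.pool = P.pool ∧
  ∃ (g₁ g₂ : List (Finset ℕ)) (Γ Δ : Finset ℕ),
    P.groups = g₁ ++ Γ :: Δ :: g₂ ∧ C.groups = g₁ ++ Δ :: Γ :: g₂

/-- Pool weakening: insert a new oformula, contained in no ogroup. -/
def PoolWeakStep (P C : Cirquent) : Prop :=
  ∃ (l₁ l₂ : List Fml) (F : Fml),
    P.pool = l₁ ++ l₂ ∧ C.pool = l₁ ++ F :: l₂ ∧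
    C.groups = P.groups.map (Finset.image (insShift l₁.length))

/-- Ogroup weakening: add a new arc between a pre-existing ogroup and oformula. -/
def OgWeakStep (P C : Cirquent) : Prop :=
  C.pool = P.pool ∧
  ∃ (g₁ g₂ : List (Finset ℕ)) (Γ : Finset ℕ) (j : ℕ),
    j < P.pool.length ∧ j ∉ Γ ∧
    P.groups = g₁ ++ Γ :: g₂ ∧ C.groups = g₁ ++ insert j Γ :: g₂

/-- Downward duplication: replace an ogroup by two adjacent copies of it. -/
def DupDownStep (P C : Cirquent) : Prop :=
  C.pool = P.pool ∧
  ∃ (g₁ g₂ : List (Finset ℕ)) (Γ : Finset ℕ),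
    P.groups = g₁ ++ Γ :: g₂ ∧ C.groups = g₁ ++ Γ :: Γ :: g₂

/-- Upward duplication: the converse of downward duplication. -/
def DupUpStep (P C : Cirquent) : Prop :=
  C.pool = P.pool ∧
  ∃ (g₁ g₂ : List (Finset ℕ)) (Γ : Finset ℕ),
    P.groups = g₁ ++ Γ :: Γ :: g₂ ∧ C.groups = g₁ ++ Γ :: g₂

/-- ∨-introduction: merge two adjacent oformulas F, G into F ∨ G. -/
def OrIntroStep (P C : Cirquent) : Prop :=
  ∃ (l₁ l₂ : List Fml) (F G : Fml),
    P.pool = l₁ ++ F :: G :: l₂ ∧ C.pool = l₁ ++ (Fml.or F G) :: l₂ ∧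
    C.groups = P.groups.map (Finset.image (mergeIdx l₁.length))

/-- The merging of the ogroup list in ∧-introduction: no ogroup contains both `i`
and `i+1`; every ogroup containing `i` is immediately followed by one containing
`i+1` and vice versa; such pairs are merged. -/
inductive AndMerge (i : ℕ) : List (Finset ℕ) → List (Finset ℕ) → Prop where
  | nil : AndMerge i [] []
  | skip {Γ : Finset ℕ} {l l' : List (Finset ℕ)} :
      i ∉ Γ → (i + 1) ∉ Γ → AndMerge i l l' → AndMerge i (Γ :: l) (Γ :: l')
  | merge {Γ Δ : Finset ℕ} {l l' : List (Finset ℕ)} :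
      i ∈ Γ → (i + 1) ∉ Γ → (i + 1) ∈ Δ → i ∉ Δ →
      AndMerge i l l' → AndMerge i (Γ :: Δ :: l) ((Γ ∪ Δ) :: l')

/-- ∧-introduction. -/
def AndIntroStep (P C : Cirquent) : Prop :=
  ∃ (l₁ l₂ : List Fml) (F G : Fml) (merged : List (Finset ℕ)),
    P.pool = l₁ ++ F :: G :: l₂ ∧ C.pool = l₁ ++ (Fml.and F G) :: l₂ ∧
    AndMerge l₁.length P.groups merged ∧
    C.groups = merged.map (Finset.image (mergeIdx l₁.length))

inductive RuleName where
  | emptyAx | idAx | mix | ofExch | ogExch | poolWeak | ogWeak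
  | dupDown | dupUp | orIntro | andIntro
deriving DecidableEq

/-- The unary (one-premise) rules, by name. -/
def unRel : RuleName → Cirquent → Cirquent → Prop
  | .ofExch => OfExchStep
  | .ogExch => OgExchStep
  | .poolWeak => PoolWeakStep
  | .ogWeak => OgWeakStep
  | .dupDown => DupDownStep
  | .dupUp => DupUpStep
  | .orIntro => OrIntroStep
  | .andIntro => AndIntroStep
  | _ => fun _ _ => False

/-- Proof trees: each node is labeled by its cirquent and the rule used. -/
inductive PTree where
  | leaf (C : Cirquent) (r : RuleName)
  | un (C : Cirquent) (r : RuleName) (p : PTree)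
  | bin (C : Cirquent) (r : RuleName) (p q : PTree)

namespace PTree

def concl : PTree → Cirquent
  | leaf C _ => C
  | un C _ _ => C
  | bin C _ _ _ => C

/-- Validity: each node follows from its children by the named rule. -/
def Valid : PTree → Prop
  | leaf C r =>
      (r = .emptyAx ∧ C = emptyCirquent) ∨ (r = .idAx ∧ ∃ F, C = idCirquent F)
  | un C r p => p.Valid ∧ unRel r p.concl C
  | bin C r p q => p.Valid ∧ q.Valid ∧ r = .mix ∧ MixStep p.concl q.concl C

/-- Number of applications of rule `r` in the proof. -/
def count (r : RuleName) : PTree → ℕ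
  | leaf _ r' => if r' = r then 1 else 0
  | un _ r' p => (if r' = r then 1 else 0) + p.count r
  | bin _ r' p q => (if r' = r then 1 else 0) + p.count r + q.count r

/-- The cirquents occurring in the proof. -/
def cirquents : PTree → List Cirquent
  | leaf C _ => [C]
  | un C _ p => C :: p.cirquents
  | bin C _ p q => C :: (p.cirquents ++ q.cirquents)

/-- Total number of rule applications (nodes). -/
def nodes : PTree → ℕ
  | leaf _ _ => 1
  | un _ _ p => p.nodes + 1
  | bin _ _ p q => p.nodes + q.nodes + 1

/-- Number of leaves of the proof tree. -/
def leavesCount : PTree → ℕ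
  | leaf _ _ => 1
  | un _ _ p => p.leavesCount
  | bin _ _ p q => p.leavesCount + q.leavesCount

end PTree

/-- A proof uses no duplication. -/
def DupFree (p : PTree) : Prop :=
  p.count RuleName.dupDown = 0 ∧ p.count RuleName.dupUp = 0

/-- Provability of a cirquent in CL5. -/
def ProvesC (C : Cirquent) : Prop := ∃ p : PTree, p.Valid ∧ p.concl = C

/-- Provability of a formula in CL5. -/
def ProvesCL5 (F : Fml) : Prop := ∃ p : PTree, p.Valid ∧ p.concl = fmlCirquent F

/-- Provability of a formula in CL5⁻ (CL5 without duplication). -/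
def ProvesCL5m (F : Fml) : Prop :=
  ∃ p : PTree, p.Valid ∧ DupFree p ∧ p.concl = fmlCirquent F

/-- Number of arcs of a cirquent (sum of the sizes of its ogroups). -/
def Cirquent.arcs (C : Cirquent) : ℕ := (C.groups.map Finset.card).sum

/-- Size of a cirquent: sum of the lengths of the oformulas in its pool plus
the sum of the sizes of its ogroups. -/
def Cirquent.size (C : Cirquent) : ℕ := (C.pool.map Fml.len).sum + C.arcs

/-- Size of a proof: the sum of the sizes of the cirquents it contains. -/
def PTree.size (p : PTree) : ℕ := (p.cirquents.map Cirquent.size).sum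

/-- Total number of positive occurrences of atoms in the pool. -/
def Cirquent.poolPosOcc (C : Cirquent) : ℕ := (C.pool.map Fml.posOcc).sum

end CirquentCalc

/-!
Only exchanges and mixes can occur unboundedly often in a duplication-free proof. Give every other
rule weight one: the potential `arcs + poolLen³` of a cirquent grows at each rule by at least its
weight, so a proof of a formula of length `k` has weight at most `1 + k³`.

The proof is then rebuilt bottom-up into one whose conclusion is only exchange-equivalent to the
original (pool permuted, ogroups reordered), so exchanges cost nothing. Before a weighted rule, or
a mix of two nonempty premises, the exact premise is restored by bubble sort with at most `2k²`
exchanges; mixes with an empty side are dropped. Each unit of weight thus costs `O(k²)` nodes,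
and the rebuilt proof has `O(k⁵)` nodes.
-/

namespace CirquentCalc

lemma Fml.one_le_len (F : Fml) : 1 ≤ F.len := by
  cases F <;> simp [Fml.len]

def Cirquent.poolLen (C : Cirquent) : ℕ := (C.pool.map Fml.len).sum

def Cirquent.WellIndexed (C : Cirquent) : Prop := ∀ g ∈ C.groups, ∀ j ∈ g, j < C.pool.length

lemma Cirquent.length_pool_le_poolLen (C : Cirquent) : C.pool.length ≤ C.poolLen := by
  simpa [Cirquent.poolLen] using
    List.length_le_sum_of_one_le (C.pool.map Fml.len) (by simp [Fml.one_le_len])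

lemma swapIdx_eq_swap (i : ℕ) : swapIdx i = Equiv.swap i (i + 1) := by
  ext j; simp only [swapIdx, Equiv.swap_apply_def]

lemma insShift_injective (i : ℕ) : Function.Injective (insShift i) := by
  intro a b h; unfold insShift at h; split_ifs at h <;> omega

lemma mergeIdx_lt {i n j : ℕ} (hi : i + 1 < n) (hj : j < n) : mergeIdx i j < n - 1 := by
  unfold mergeIdx; split_ifs <;> omega

lemma card_le_card_image_mergeIdx_add_one (i : ℕ) (g : Finset ℕ) :
    g.card ≤ (g.image (mergeIdx i)).card + 1 := by
  have hinj : Set.InjOn (mergeIdx i) (g.erase (i + 1)) := by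
    intro a ha b hb h
    simp only [Finset.coe_erase, Set.mem_sdiff, Set.mem_singleton_iff] at ha hb
    unfold mergeIdx at h; split_ifs at h <;> omega
  calc g.card ≤ (g.erase (i + 1)).card + 1 := by
        have := Finset.pred_card_le_card_erase (s := g) (a := i + 1); omega
    _ = ((g.erase (i + 1)).image (mergeIdx i)).card + 1 := by rw [Finset.card_image_of_injOn hinj]
    _ ≤ (g.image (mergeIdx i)).card + 1 := by
      grw [Finset.erase_subset]

lemma map_image_id (l : List (Finset ℕ)) : l.map (Finset.image fun j => j) = l :=
  (List.map_congr_left fun _ _ => Finset.image_id').trans (List.map_id l)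

lemma sum_card_map_image_of_injective {f : ℕ → ℕ} (hf : Function.Injective f)
    (l : List (Finset ℕ)) :
    ((l.map (Finset.image f)).map Finset.card).sum = (l.map Finset.card).sum := by
  simp [Function.comp_def, Finset.card_image_of_injective _ hf]

lemma sum_card_le_sum_card_map_image_mergeIdx (i : ℕ) (l : List (Finset ℕ)) :
    (l.map Finset.card).sum ≤
      ((l.map (Finset.image (mergeIdx i))).map Finset.card).sum + l.length := by
  induction l with
  | nil => simp
  | cons g l ih =>
    have := card_le_card_image_mergeIdx_add_one i g
    simp only [List.map_cons, List.sum_cons, List.length_cons]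
    omega

lemma wellIndexed_of_groups_eq_map {P C : Cirquent} {f : ℕ → ℕ} (hP : P.WellIndexed)
    (hf : ∀ j < P.pool.length, f j < C.pool.length)
    (hg : C.groups = P.groups.map (Finset.image f)) : C.WellIndexed := by
  intro g hg' j hj
  rw [hg, List.mem_map] at hg'
  obtain ⟨g₀, hg₀, rfl⟩ := hg'
  obtain ⟨a, ha, rfl⟩ := Finset.mem_image.mp hj
  exact hf a (hP g₀ hg₀ a ha)

lemma wellIndexed_of_pool_eq {P C : Cirquent} (hP : P.WellIndexed) (hp : C.pool = P.pool)
    (hg : C.groups ⊆ P.groups) : C.WellIndexed :=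
  fun g hg' => hp ▸ hP g (hg hg')

namespace AndMerge

variable {i : ℕ} {l l' : List (Finset ℕ)}

lemma length_le (h : AndMerge i l l') : l'.length ≤ l.length := by
  induction h <;> simp <;> omega

lemma exists_mem_of_mem (h : AndMerge i l l') {g : Finset ℕ} (hg : g ∈ l') {j : ℕ}
    (hj : j ∈ g) : ∃ g' ∈ l, j ∈ g' := by
  induction h with
  | nil => simp at hg
  | skip _ _ _ ih =>
    rcases List.mem_cons.mp hg with rfl | hg
    · exact ⟨g, by simp, hj⟩
    · obtain ⟨g', hg', hj'⟩ := ih hg; exact ⟨g', by simp [hg'], hj'⟩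
  | @merge Γ Δ _ _ _ _ _ _ _ ih =>
    rcases List.mem_cons.mp hg with rfl | hg
    · rcases Finset.mem_union.mp hj with hj | hj
      · exact ⟨Γ, by simp, hj⟩
      · exact ⟨Δ, by simp, hj⟩
    · obtain ⟨g', hg', hj'⟩ := ih hg; exact ⟨g', by simp [hg'], hj'⟩

lemma sum_card_le (h : AndMerge i l l') {K : ℕ} (hK : ∀ g ∈ l, g.card ≤ K) :
    (l.map Finset.card).sum ≤ (l'.map Finset.card).sum + K * l'.length := by
  induction h with
  | nil => simp
  | skip _ _ _ ih =>
    have := ih (fun g hg => hK g (by simp [hg]))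
    simp only [List.map_cons, List.sum_cons, List.length_cons]
    nlinarith
  | @merge Γ Δ _ _ _ _ _ _ _ ih =>
    have := ih (fun g hg => hK g (by simp [hg]))
    have hΔ : Δ.card ≤ K := hK Δ (by simp)
    have hΓ : Γ.card ≤ (Γ ∪ Δ).card := Finset.card_le_card Finset.subset_union_left
    simp only [List.map_cons, List.sum_cons, List.length_cons]
    nlinarith

end AndMerge

/-- Each weighted rule raises the potential by at least its weight. An introduction raises
`poolLen` by one, and the growth of the cubic term exceeds the at most `poolLen² + poolLen` arcs
that it can merge away. -/
def Cirquent.potential (C : Cirquent) : ℕ := C.arcs + C.poolLen ^ 3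

def RuleName.weight : RuleName → ℕ
  | .idAx | .poolWeak | .ogWeak | .orIntro | .andIntro => 1
  | _ => 0

def PTree.weight : PTree → ℕ
  | .leaf _ r => r.weight
  | .un _ r p => r.weight + p.weight
  | .bin _ r p q => r.weight + p.weight + q.weight

lemma dupFree_leaf (C : Cirquent) {r : RuleName} (h1 : r ≠ .dupDown) (h2 : r ≠ .dupUp) :
    DupFree (.leaf C r) := by
  simp [DupFree, PTree.count, h1, h2]

lemma dupFree_un_iff {C : Cirquent} {r : RuleName} {q : PTree} :
    DupFree (.un C r q) ↔ r ≠ .dupDown ∧ r ≠ .dupUp ∧ DupFree q := by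
  simp only [DupFree, PTree.count]
  by_cases h1 : r = .dupDown <;> by_cases h2 : r = .dupUp <;> simp_all

lemma dupFree_bin_iff {C : Cirquent} {q₁ q₂ : PTree} :
    DupFree (.bin C .mix q₁ q₂) ↔ DupFree q₁ ∧ DupFree q₂ := by
  simp only [DupFree, PTree.count]
  simp only [reduceCtorEq, if_false, zero_add, Nat.add_eq_zero_iff]
  tauto

@[elab_as_elim]
theorem PTree.dupFree_induction {motive : PTree → Prop} (p : PTree) (hv : p.Valid)
    (hdf : DupFree p)
    (emptyAx : motive (.leaf emptyCirquent .emptyAx))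
    (idAx : ∀ F, motive (.leaf (idCirquent F) .idAx))
    (un : ∀ C r q, r ≠ .dupDown → r ≠ .dupUp → unRel r q.concl C → q.Valid → DupFree q →
      motive q → motive (.un C r q))
    (mix : ∀ C q₁ q₂, MixStep q₁.concl q₂.concl C → q₁.Valid → DupFree q₁ → q₂.Valid →
      DupFree q₂ → motive q₁ → motive q₂ → motive (.bin C .mix q₁ q₂)) :
    motive p := by
  induction p with
  | leaf C r => rcases hv with ⟨rfl, rfl⟩ | ⟨rfl, F, rfl⟩; exacts [emptyAx, idAx F]
  | un C r q ih =>
    obtain ⟨hq, hr⟩ := hv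
    obtain ⟨h1, h2, hdfq⟩ := dupFree_un_iff.mp hdf
    exact un C r q h1 h2 hr hq hdfq (ih hq hdfq)
  | bin C r q₁ q₂ ih₁ ih₂ =>
    obtain ⟨h₁, h₂, rfl, hmix⟩ := hv
    obtain ⟨hdf₁, hdf₂⟩ := dupFree_bin_iff.mp hdf
    exact mix C q₁ q₂ hmix h₁ hdf₁ h₂ hdf₂ (ih₁ h₁ hdf₁) (ih₂ h₂ hdf₂)

section RuleFacts

variable {P C : Cirquent}

lemma OfExchStep.poolLen_eq (h : OfExchStep P C) : C.poolLen = P.poolLen := by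
  obtain ⟨l₁, l₂, F, G, hP, hC, -⟩ := h
  simp [Cirquent.poolLen, hP, hC]; omega

lemma PoolWeakStep.poolLen_lt (h : PoolWeakStep P C) : P.poolLen < C.poolLen := by
  obtain ⟨l₁, l₂, F, hP, hC, -⟩ := h
  have := F.one_le_len
  simp [Cirquent.poolLen, hP, hC]; omega

lemma OrIntroStep.poolLen_eq (h : OrIntroStep P C) : C.poolLen = P.poolLen + 1 := by
  obtain ⟨l₁, l₂, F, G, hP, hC, -⟩ := h
  simp [Cirquent.poolLen, hP, hC, Fml.len]; omega

lemma AndIntroStep.poolLen_eq (h : AndIntroStep P C) : C.poolLen = P.poolLen + 1 := by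
  obtain ⟨l₁, l₂, F, G, -, hP, hC, -⟩ := h
  simp [Cirquent.poolLen, hP, hC, Fml.len]; omega

lemma OfExchStep.arcs_eq (h : OfExchStep P C) : C.arcs = P.arcs := by
  obtain ⟨l₁, l₂, F, G, -, -, hg⟩ := h
  rw [Cirquent.arcs, hg, swapIdx_eq_swap, sum_card_map_image_of_injective (Equiv.injective _)]
  rfl

lemma OgExchStep.arcs_eq (h : OgExchStep P C) : C.arcs = P.arcs := by
  obtain ⟨-, g₁, g₂, Γ, Δ, hP, hC⟩ := h
  simp [Cirquent.arcs, hP, hC]; omega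

lemma PoolWeakStep.arcs_eq (h : PoolWeakStep P C) : C.arcs = P.arcs := by
  obtain ⟨l₁, l₂, F, -, -, hg⟩ := h
  rw [Cirquent.arcs, hg, sum_card_map_image_of_injective (insShift_injective _)]
  rfl

lemma OgWeakStep.arcs_eq (h : OgWeakStep P C) : C.arcs = P.arcs + 1 := by
  obtain ⟨-, g₁, g₂, Γ, j, -, hj, hP, hC⟩ := h
  simp [Cirquent.arcs, hP, hC, Finset.card_insert_of_notMem hj]; omega

lemma DupDownStep.arcs_le (h : DupDownStep P C) : P.arcs ≤ C.arcs := by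
  obtain ⟨-, g₁, g₂, Γ, hP, hC⟩ := h
  simp [Cirquent.arcs, hP, hC]

lemma OrIntroStep.arcs_le (h : OrIntroStep P C) : P.arcs ≤ C.arcs + P.groups.length := by
  obtain ⟨l₁, -, -, -, -, -, hg⟩ := h
  rw [Cirquent.arcs, Cirquent.arcs, hg]
  exact sum_card_le_sum_card_map_image_mergeIdx _ _

lemma AndIntroStep.arcs_le (h : AndIntroStep P C) (hP : P.WellIndexed) :
    P.arcs ≤ C.arcs + (P.pool.length + 1) * P.groups.length := by
  obtain ⟨l₁, -, -, -, merged, -, -, hm, hg⟩ := h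
  have hcard : ∀ g ∈ P.groups, g.card ≤ P.pool.length := fun g hg' =>
    (Finset.card_le_card fun j hj => Finset.mem_range.mpr (hP g hg' j hj)).trans_eq
      (Finset.card_range _)
  have h₁ := hm.sum_card_le hcard
  have h₂ := sum_card_le_sum_card_map_image_mergeIdx l₁.length merged
  have h₃ := Nat.mul_le_mul_left (P.pool.length + 1) hm.length_le
  rw [Cirquent.arcs, Cirquent.arcs, hg]
  nlinarith

lemma AndIntroStep.length_groups_le (h : AndIntroStep P C) :
    C.groups.length ≤ P.groups.length := by
  obtain ⟨_, _, _, _, merged, -, -, hm, hg⟩ := h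
  simpa [hg] using hm.length_le

lemma OgWeakStep.wellIndexed (h : OgWeakStep P C) (hP : P.WellIndexed) : C.WellIndexed := by
  obtain ⟨hp, g₁, g₂, Γ, j, hj, -, hPg, hCg⟩ := h
  intro g hg a ha
  simp only [hCg, List.mem_append, List.mem_cons] at hg
  rw [hp]
  rcases hg with hg | rfl | hg
  · exact hP g (by simp [hPg, hg]) a ha
  · rcases Finset.mem_insert.mp ha with rfl | ha
    exacts [hj, hP Γ (by simp [hPg]) a ha]
  · exact hP g (by simp [hPg, hg]) a ha

lemma AndIntroStep.wellIndexed (h : AndIntroStep P C) (hP : P.WellIndexed) : C.WellIndexed := by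
  obtain ⟨l₁, l₂, F, G, merged, hPp, hCp, hm, hg⟩ := h
  have hi : l₁.length + 1 < P.pool.length := by simp [hPp]
  have hC : C.pool.length = P.pool.length - 1 := by simp [hPp, hCp]
  intro g hg' j hj
  obtain ⟨g₀, hg₀, rfl⟩ := List.mem_map.mp (hg ▸ hg')
  obtain ⟨a, ha, rfl⟩ := Finset.mem_image.mp hj
  obtain ⟨g', hg', ha'⟩ := hm.exists_mem_of_mem hg₀ ha
  exact hC ▸ mergeIdx_lt hi (hP g' hg' a ha')

end RuleFacts

section UnaryRules

variable {r : RuleName} {P C : Cirquent}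

lemma poolLen_le_of_unRel (h : unRel r P C) : P.poolLen ≤ C.poolLen := by
  cases r <;> simp only [unRel] at h
  case ofExch => exact h.poolLen_eq.ge
  case poolWeak => exact h.poolLen_lt.le
  case orIntro => exact h.poolLen_eq ▸ Nat.le_succ _
  case andIntro => exact h.poolLen_eq ▸ Nat.le_succ _
  all_goals simp [Cirquent.poolLen, h.1]

lemma length_groups_le_of_unRel (h : unRel r P C) (hr : r ≠ .dupDown) :
    C.groups.length ≤ P.groups.length := by
  cases r <;> simp only [unRel] at h
  case ofExch | poolWeak | orIntro => obtain ⟨_, _, _, _, _, hg⟩ := h; simp [hg]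
  case ogExch | ogWeak => obtain ⟨-, _, _, _, _, hP, hC⟩ := h; simp [hP, hC]
  case dupDown => exact absurd rfl hr
  case dupUp => obtain ⟨-, _, _, _, hP, hC⟩ := h; simp [hP, hC]
  case andIntro => exact h.length_groups_le

lemma wellIndexed_of_unRel (h : unRel r P C) (hP : P.WellIndexed) : C.WellIndexed := by
  cases r <;> simp only [unRel] at h
  case ofExch =>
    obtain ⟨l₁, l₂, F, G, hPp, hCp, hg⟩ := h
    refine wellIndexed_of_groups_eq_map hP (fun j hj => ?_) hg
    simp only [hPp, hCp, List.length_append, List.length_cons] at hj ⊢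
    unfold swapIdx; split_ifs <;> omega
  case poolWeak =>
    obtain ⟨l₁, l₂, F, hPp, hCp, hg⟩ := h
    refine wellIndexed_of_groups_eq_map hP (fun j hj => ?_) hg
    simp only [hPp, hCp, List.length_append, List.length_cons] at hj ⊢
    unfold insShift; split_ifs <;> omega
  case orIntro =>
    obtain ⟨l₁, l₂, F, G, hPp, hCp, hg⟩ := h
    refine wellIndexed_of_groups_eq_map hP (fun j hj => ?_) hg
    have := mergeIdx_lt (i := l₁.length) (by simp [hPp]) hj
    simpa [hPp, hCp] using this
  case andIntro => exact h.wellIndexed hP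
  case ogWeak => exact h.wellIndexed hP
  case ogExch =>
    obtain ⟨hp, _, _, _, _, hPg, hCg⟩ := h
    refine wellIndexed_of_pool_eq hP hp fun g => ?_
    simp only [hPg, hCg, List.mem_append, List.mem_cons]
    tauto
  all_goals
    obtain ⟨hp, _, _, _, hPg, hCg⟩ := h
    refine wellIndexed_of_pool_eq hP hp fun g => ?_
    simp only [hPg, hCg, List.mem_append, List.mem_cons]
    tauto

lemma weight_add_potential_le_of_unRel (h : unRel r P C) (hr : r ≠ .dupUp)
    (hP : P.WellIndexed) (hg : P.groups.length ≤ P.poolLen) :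
    r.weight + P.potential ≤ C.potential := by
  have hpool := P.length_pool_le_poolLen
  unfold Cirquent.potential
  cases r <;> simp only [unRel] at h <;> simp only [RuleName.weight]
  case ofExch => rw [h.arcs_eq, h.poolLen_eq]; omega
  case ogExch => rw [h.arcs_eq, Cirquent.poolLen, Cirquent.poolLen, h.1]; omega
  case poolWeak =>
    rw [h.arcs_eq]
    have := Nat.pow_lt_pow_left h.poolLen_lt (n := 3) (by norm_num)
    omega
  case ogWeak => rw [h.arcs_eq, Cirquent.poolLen, Cirquent.poolLen, h.1]; omega
  case dupDown => rw [Cirquent.poolLen, Cirquent.poolLen, h.1]; have := h.arcs_le; omega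
  case dupUp => exact absurd rfl hr
  case orIntro =>
    have := h.arcs_le
    rw [h.poolLen_eq]
    nlinarith
  case andIntro =>
    have := h.arcs_le hP
    rw [h.poolLen_eq]
    nlinarith

end UnaryRules

section Mix

variable {A B C : Cirquent}

lemma MixStep.poolLen_eq (h : MixStep A B C) : C.poolLen = A.poolLen + B.poolLen := by
  simp [Cirquent.poolLen, h.1]

lemma MixStep.length_groups_eq (h : MixStep A B C) :
    C.groups.length = A.groups.length + B.groups.length := by
  simp [h.2]

lemma MixStep.arcs_eq (h : MixStep A B C) : C.arcs = A.arcs + B.arcs := by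
  rw [Cirquent.arcs, h.2, List.map_append, List.sum_append,
    sum_card_map_image_of_injective (add_left_injective _)]
  rfl

lemma MixStep.wellIndexed (h : MixStep A B C) (hA : A.WellIndexed) (hB : B.WellIndexed) :
    C.WellIndexed := by
  intro g hg j hj
  rw [h.1, List.length_append]
  rcases List.mem_append.mp (h.2 ▸ hg) with hg | hg
  · exact (hA g hg j hj).trans_le (Nat.le_add_right _ _)
  · obtain ⟨g₀, hg₀, rfl⟩ := List.mem_map.mp hg
    obtain ⟨a, ha, rfl⟩ := Finset.mem_image.mp hj
    have := hB g₀ hg₀ a ha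
    omega

lemma MixStep.eq_of_empty_left (h : MixStep emptyCirquent B C) : C = B := by
  obtain ⟨hp, hg⟩ := h
  cases B; cases C
  simp_all [emptyCirquent, map_image_id]

lemma MixStep.eq_of_empty_right (h : MixStep A emptyCirquent C) : C = A := by
  obtain ⟨hp, hg⟩ := h
  cases C
  simp_all [emptyCirquent]

end Mix

lemma idCirquent_wellIndexed (F : Fml) : (idCirquent F).WellIndexed := by
  simp [Cirquent.WellIndexed, idCirquent]

lemma two_le_poolLen_idCirquent (F : Fml) : 2 ≤ (idCirquent F).poolLen := by
  have := F.one_le_len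
  have := F.negate.one_le_len
  simp [Cirquent.poolLen, idCirquent]; omega

namespace PTree

variable {p : PTree}

lemma wellIndexed_concl (hv : p.Valid) (hdf : DupFree p) : p.concl.WellIndexed := by
  refine dupFree_induction p hv hdf ?_ (fun F => ?_) (fun C r q _ _ hr _ _ ih => ?_)
    (fun C q₁ q₂ hmix _ _ _ _ ih₁ ih₂ => ?_)
  · simp [Cirquent.WellIndexed, concl, emptyCirquent]
  · exact idCirquent_wellIndexed F
  · exact wellIndexed_of_unRel hr ih
  · exact hmix.wellIndexed ih₁ ih₂

lemma two_mul_length_groups_le_poolLen (hv : p.Valid) (hdf : DupFree p) :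
    2 * p.concl.groups.length ≤ p.concl.poolLen := by
  refine dupFree_induction p hv hdf ?_ (fun F => ?_) (fun C r q hr _ hstep _ _ ih => ?_)
    (fun C q₁ q₂ hmix _ _ _ _ ih₁ ih₂ => ?_)
  · simp [concl, emptyCirquent]
  · simpa [concl, idCirquent] using two_le_poolLen_idCirquent F
  · have := length_groups_le_of_unRel hstep hr
    have := poolLen_le_of_unRel hstep
    show 2 * C.groups.length ≤ C.poolLen
    omega
  · show 2 * C.groups.length ≤ C.poolLen
    rw [hmix.length_groups_eq, hmix.poolLen_eq]
    omega

lemma weight_le_potential (hv : p.Valid) (hdf : DupFree p) : p.weight ≤ p.concl.potential := by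
  refine dupFree_induction p hv hdf ?_ (fun F => ?_) (fun C r q _ hr hstep hq hdfq ih => ?_)
    (fun C q₁ q₂ hmix _ _ _ _ ih₁ ih₂ => ?_)
  · simp [weight, RuleName.weight]
  · have : (idCirquent F).arcs = 2 := by simp [Cirquent.arcs, idCirquent]
    simp only [weight, RuleName.weight, concl, Cirquent.potential]
    omega
  · have := weight_add_potential_le_of_unRel hstep hr (wellIndexed_concl hq hdfq)
      (by have := two_mul_length_groups_le_poolLen hq hdfq; omega)
    show r.weight + q.weight ≤ C.potential
    omega
  · show 0 + q₁.weight + q₂.weight ≤ C.potential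
    rw [Cirquent.potential, hmix.arcs_eq, hmix.poolLen_eq]
    unfold Cirquent.potential at ih₁ ih₂
    have := pow_add_pow_le (Nat.zero_le q₁.concl.poolLen) (Nat.zero_le q₂.concl.poolLen)
      three_ne_zero
    omega

end PTree

def Extends (k : ℕ) (C D : Cirquent) : Prop :=
  ∀ q : PTree, q.Valid → DupFree q → q.concl = C →
    ∃ q' : PTree, q'.Valid ∧ DupFree q' ∧ q'.concl = D ∧ q'.nodes ≤ q.nodes + k

namespace Extends

variable {k m : ℕ} {C D E : Cirquent}

lemma refl (C : Cirquent) : Extends 0 C C := fun q hv hdf hc => ⟨q, hv, hdf, hc, le_rfl⟩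

lemma trans (h₁ : Extends k C D) (h₂ : Extends m D E) : Extends (k + m) C E := by
  intro q hv hdf hc
  obtain ⟨q₁, hv₁, hdf₁, hc₁, hn₁⟩ := h₁ q hv hdf hc
  obtain ⟨q₂, hv₂, hdf₂, hc₂, hn₂⟩ := h₂ q₁ hv₁ hdf₁ hc₁
  exact ⟨q₂, hv₂, hdf₂, hc₂, by omega⟩

lemma mono (hkm : k ≤ m) (h : Extends k C D) : Extends m C D := by
  intro q hv hdf hc
  obtain ⟨q', hv', hdf', hc', hn'⟩ := h q hv hdf hc
  exact ⟨q', hv', hdf', hc', by omega⟩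

lemma of_unRel {r : RuleName} (h : unRel r C D) (h₁ : r ≠ .dupDown) (h₂ : r ≠ .dupUp) :
    Extends 1 C D :=
  fun q hv hdf hc => ⟨.un D r q, ⟨hv, hc ▸ h⟩, dupFree_un_iff.mpr ⟨h₁, h₂, hdf⟩, rfl, le_rfl⟩

end Extends

theorem rel_of_perm_of_adjacent_swap {α : Type*} {E : ℕ → List α → List α → Prop}
    (refl : ∀ l, E 0 l l)
    (trans : ∀ {k m l₁ l₂ l₃}, E k l₁ l₂ → E m l₂ l₃ → E (k + m) l₁ l₃)
    (mono : ∀ {k m l₁ l₂}, k ≤ m → E k l₁ l₂ → E m l₁ l₂)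
    (swap : ∀ pre x y suf, E 1 (pre ++ x :: y :: suf) (pre ++ y :: x :: suf))
    {l l' : List α} (h : l.Perm l') (pre : List α) :
    E (l.length ^ 2) (pre ++ l) (pre ++ l') := by
  have bubble : ∀ (u : List α) pre x v, E u.length (pre ++ u ++ x :: v) (pre ++ x :: u ++ v) := by
    intro u
    induction u using List.reverseRecOn with
    | nil => intro pre x v; simpa using refl _
    | append_singleton us y ih =>
      intro pre x v
      have h₁ := swap (pre ++ us) y x v
      have h₂ := ih pre x (y :: v)
      simpa [add_comm] using trans h₁ (by simpa using h₂)
  induction l' generalizing l pre with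
  | nil => simpa [List.perm_nil.mp h] using refl pre
  | cons x t ih =>
    obtain ⟨u, v, rfl⟩ := List.append_of_mem (h.mem_iff.mpr List.mem_cons_self)
    have hperm : (u ++ v).Perm t := (List.perm_middle.symm.trans h).cons_inv
    have h₂ := ih hperm (pre ++ [x])
    simp only [List.append_assoc, List.singleton_append] at h₂
    refine mono ?_ (trans (by simpa using bubble u pre x v) h₂)
    simp only [List.length_append, List.length_cons]
    ring_nf
    omega

lemma extends_of_perm_groups (pool : List Fml) {G G' : List (Finset ℕ)} (h : G.Perm G') :
    Extends (G.length ^ 2) ⟨pool, G⟩ ⟨pool, G'⟩ := by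
  simpa using rel_of_perm_of_adjacent_swap (E := fun k G G' => Extends k ⟨pool, G⟩ ⟨pool, G'⟩)
    (fun _ => .refl _) .trans .mono
    (fun pre x y suf => Extends.of_unRel (r := .ogExch) ⟨rfl, pre, suf, x, y, rfl, rfl⟩
      (by decide) (by decide)) h []

/-- The pool of `D` read in the order `π` (positions outside the pool read as a junk formula).
Oformula exchanges are adjacent swaps in `π`, so pool permutations are sorted like lists. -/
def Cirquent.select (D : Cirquent) (π : List ℕ) : Cirquent :=
  ⟨π.map (D.pool.getD · (.pos 0)), D.groups.map (Finset.image (List.idxOf · π))⟩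

lemma idxOf_swap_eq_swapIdx (pre suf : List ℕ) {x y : ℕ} (hxy : x ≠ y) (j : ℕ) :
    List.idxOf j (pre ++ y :: x :: suf) =
      swapIdx pre.length (List.idxOf j (pre ++ x :: y :: suf)) := by
  have hlt : j ∈ pre → List.idxOf j pre < pre.length := List.idxOf_lt_length_iff.mpr
  simp only [List.idxOf_append, List.idxOf_cons, swapIdx, beq_iff_eq, cond_eq_ite]
  split_ifs <;> first | omega | (have := hlt ‹_›; omega)

lemma extends_select_swap (D : Cirquent) (pre : List ℕ) (x y : ℕ) (suf : List ℕ) :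
    Extends 1 (D.select (pre ++ x :: y :: suf)) (D.select (pre ++ y :: x :: suf)) := by
  by_cases hxy : x = y
  · subst hxy; exact (Extends.refl _).mono zero_le_one
  refine Extends.of_unRel (r := .ofExch) ⟨pre.map (D.pool.getD · (.pos 0)),
    suf.map (D.pool.getD · (.pos 0)), D.pool.getD x (.pos 0), D.pool.getD y (.pos 0),
    by simp [Cirquent.select], by simp [Cirquent.select], ?_⟩ (by decide) (by decide)
  simp only [Cirquent.select, List.map_map, List.length_map]
  refine List.map_congr_left fun g _ => ?_
  simp only [Function.comp_apply, Finset.image_image]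
  exact Finset.image_congr fun j _ => idxOf_swap_eq_swapIdx pre suf hxy j

lemma extends_select_of_perm (D : Cirquent) {π π' : List ℕ} (h : π.Perm π') :
    Extends (π.length ^ 2) (D.select π) (D.select π') := by
  simpa using rel_of_perm_of_adjacent_swap (E := fun k π π' => Extends k (D.select π) (D.select π'))
    (fun _ => .refl _) .trans .mono (extends_select_swap D) h []

lemma idxOf_range {n j : ℕ} (hj : j < n) : List.idxOf j (List.range n) = j := by
  have := List.nodup_range.idxOf_getElem j (by simpa using hj)
  rwa [List.getElem_range] at this

lemma Cirquent.select_range {D : Cirquent} (hD : D.WellIndexed) :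
    D.select (List.range D.pool.length) = D := by
  obtain ⟨pool, groups⟩ := D
  simp only [Cirquent.select, Cirquent.mk.injEq]
  constructor
  · exact List.ext_getElem (by simp) fun i h₁ h₂ => by simp [h₂]
  · refine (List.map_congr_left fun g hg => ?_).trans (List.map_id _)
    exact (Finset.image_congr fun j hj => idxOf_range (hD g hg j hj)).trans Finset.image_id

lemma lt_length_of_getElem?_eq {α : Type*} {l l' : List α} {i j : ℕ} (h : l[j]? = l'[i]?)
    (hi : i < l'.length) : j < l.length := by
  rw [List.getElem?_eq_getElem hi] at h
  exact (List.getElem?_eq_some_iff.mp h).1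

def ExchEquiv (C D : Cirquent) : Prop :=
  C.pool.length = D.pool.length ∧ ∃ σ : Equiv.Perm ℕ,
    (∀ i < C.pool.length, D.pool[σ i]? = C.pool[i]?) ∧
    D.groups.Perm (C.groups.map (Finset.image σ))

namespace ExchEquiv

variable {C D E : Cirquent}

lemma refl (C : Cirquent) : ExchEquiv C C :=
  ⟨rfl, 1, fun _ _ => rfl, .of_eq (map_image_id _).symm⟩

lemma trans (h₁ : ExchEquiv C D) (h₂ : ExchEquiv D E) : ExchEquiv C E := by
  obtain ⟨hlen₁, σ, hpool₁, hgroups₁⟩ := h₁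
  obtain ⟨hlen₂, τ, hpool₂, hgroups₂⟩ := h₂
  refine ⟨hlen₁.trans hlen₂, σ.trans τ, fun i hi => ?_, ?_⟩
  · simpa [hpool₁ i hi] using hpool₂ (σ i) (lt_length_of_getElem?_eq (hpool₁ i hi) hi)
  · refine hgroups₂.trans ((hgroups₁.map _).trans (.of_eq ?_))
    simp [Function.comp_def, Finset.image_image]

lemma eq_empty (h : ExchEquiv C emptyCirquent) : C = emptyCirquent := by
  obtain ⟨hlen, _, -, hgroups⟩ := h
  have hgroups : C.groups = [] := by simpa [emptyCirquent] using hgroups.symm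
  obtain ⟨pool, groups⟩ := C
  simp_all [emptyCirquent, List.length_eq_zero_iff]

lemma of_ofExchStep {P C : Cirquent} (h : OfExchStep P C) : ExchEquiv C P := by
  obtain ⟨l₁, l₂, F, G, hP, hC, hg⟩ := h
  refine ⟨by simp [hP, hC], Equiv.swap l₁.length (l₁.length + 1), fun j _ => ?_, .of_eq ?_⟩
  · rw [hP, hC, Equiv.swap_apply_def]
    rcases lt_trichotomy j l₁.length with hj | rfl | hj
    · rw [if_neg hj.ne, if_neg (by omega), List.getElem?_append_left hj,
        List.getElem?_append_left hj]
    · simp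
    · rcases Nat.lt_or_ge (l₁.length + 1) j with hj' | hj'
      · rw [if_neg hj.ne', if_neg hj'.ne', List.getElem?_append_right hj.le,
          List.getElem?_append_right hj.le]
        obtain ⟨k, rfl⟩ : ∃ k, j = l₁.length + 2 + k := ⟨j - (l₁.length + 2), by omega⟩
        simp [show l₁.length + 2 + k - l₁.length = k + 2 by omega]
      · obtain rfl : j = l₁.length + 1 := by omega
        simp
  · rw [hg, List.map_map, swapIdx_eq_swap]
    refine ((List.map_congr_left fun g _ => ?_).trans (List.map_id _)).symm
    simp [Finset.image_image, Function.comp_def]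

lemma of_ogExchStep {P C : Cirquent} (h : OgExchStep P C) : ExchEquiv C P := by
  obtain ⟨hp, g₁, g₂, Γ, Δ, hP, hC⟩ := h
  refine ⟨by rw [hp], 1, fun i _ => by rw [hp]; rfl, ?_⟩
  rw [Equiv.Perm.coe_one, Function.id_def, map_image_id, hP, hC]
  exact .append_left g₁ (.swap Δ Γ g₂)

end ExchEquiv

lemma ExchEquiv.exists_select {C D : Cirquent} (h : ExchEquiv C D) (hC : C.WellIndexed) :
    ∃ π : List ℕ, π.Perm (List.range D.pool.length) ∧ (D.select π).pool = C.pool ∧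
      (D.select π).groups.Perm C.groups := by
  obtain ⟨hlen, σ, hpool, hgroups⟩ := h
  set π := (List.range C.pool.length).map σ with hπ
  have hnodup : π.Nodup := List.nodup_range.map σ.injective
  have hσ : ∀ i < C.pool.length, σ i < D.pool.length := fun i hi =>
    lt_length_of_getElem?_eq (hpool i hi) hi
  have hidx : ∀ i < C.pool.length, List.idxOf (σ i) π = i := fun i hi => by
    have := hnodup.idxOf_getElem i (by simpa [π] using hi)
    simpa only [π, List.getElem_map, List.getElem_range] using this
  refine ⟨π, (hnodup.subperm fun x hx => ?_).perm_of_length_le (by simp [π, hlen]), ?_, ?_⟩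
  · obtain ⟨i, hi, rfl⟩ := List.mem_map.mp hx
    exact List.mem_range.mpr (hσ i (List.mem_range.mp hi))
  · refine List.ext_getElem (by simp [Cirquent.select, π]) fun i h₁ h₂ => ?_
    simp [Cirquent.select, π, List.getD_eq_getElem?_getD, hpool i h₂, h₂]
  · refine (hgroups.map _).trans (.of_eq ?_)
    rw [List.map_map]
    refine (List.map_congr_left fun g hg => ?_).trans (List.map_id _)
    simp only [Function.comp_apply, Finset.image_image, id_eq]
    exact (Finset.image_congr fun j hj => hidx j (hC g hg j hj)).trans Finset.image_id

theorem ExchEquiv.extends {C D : Cirquent} (h : ExchEquiv C D) (hC : C.WellIndexed) :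
    Extends (C.pool.length ^ 2 + C.groups.length ^ 2) D C := by
  intro q hv hdf hc
  have hD : D.WellIndexed := hc ▸ q.wellIndexed_concl hv hdf
  obtain ⟨π, hπ, hpool, hgroups⟩ := h.exists_select hC
  have h₁ := extends_select_of_perm D hπ.symm
  rw [Cirquent.select_range hD, show D.select π = ⟨C.pool, (D.select π).groups⟩ by
    rw [← hpool]] at h₁
  have h₂ := extends_of_perm_groups C.pool hgroups
  refine (h₁.trans h₂).mono ?_ q hv hdf hc
  simp [h.1, hgroups.length_eq]

lemma ExchEquiv.extends_of_poolLen_le {C D : Cirquent} {N : ℕ} (h : ExchEquiv C D)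
    (hC : C.WellIndexed) (hg : 2 * C.groups.length ≤ C.poolLen) (hN : C.poolLen ≤ N) : Extends (2 * N ^ 2) D C := by
  refine (h.extends hC).mono ?_
  have := Nat.pow_le_pow_left (C.length_pool_le_poolLen.trans hN) 2
  have := Nat.pow_le_pow_left (show C.groups.length ≤ N by omega) 2
  omega

lemma unRel_exchEquiv_or_one_le_weight {r : RuleName} {P C : Cirquent} (h : unRel r P C)
    (h₁ : r ≠ .dupDown) (h₂ : r ≠ .dupUp) : (r.weight = 0 ∧ ExchEquiv C P) ∨ 1 ≤ r.weight := by
  cases r <;> simp only [unRel] at h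
  case ofExch => exact .inl ⟨rfl, .of_ofExchStep h⟩
  case ogExch => exact .inl ⟨rfl, .of_ogExchStep h⟩
  all_goals first | exact absurd rfl h₁ | exact absurd rfl h₂ | exact .inr le_rfl

/-- The slack `K = 4N² + 2` below `2K * weight` pays for re-sorting both premises of a mix, each
at a cost of at most `2N²` exchanges. -/
def Compressible (N : ℕ) (p : PTree) : Prop :=
  p.concl.poolLen ≤ N → p.concl ≠ emptyCirquent →
    ∃ q : PTree, q.Valid ∧ DupFree q ∧ ExchEquiv p.concl q.concl ∧
      q.nodes + (4 * N ^ 2 + 2) ≤ 2 * (4 * N ^ 2 + 2) * p.weight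

lemma Compressible.exists_proof {N : ℕ} {p : PTree} (h : Compressible N p) (hv : p.Valid)
    (hdf : DupFree p) (hN : p.concl.poolLen ≤ N) (hne : p.concl ≠ emptyCirquent) :
    ∃ q : PTree, q.Valid ∧ DupFree q ∧ q.concl = p.concl ∧
      q.nodes + (4 * N ^ 2 + 2) ≤ 2 * (4 * N ^ 2 + 2) * p.weight + 2 * N ^ 2 := by
  obtain ⟨R, hvR, hdfR, hR, hnR⟩ := h hN hne
  obtain ⟨q, hvq, hdfq, hcq, hnq⟩ := hR.extends_of_poolLen_le (p.wellIndexed_concl hv hdf)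
    (p.two_mul_length_groups_le_poolLen hv hdf) hN R hvR hdfR rfl
  exact ⟨q, hvq, hdfq, hcq, by omega⟩

lemma compressible_un {N : ℕ} {C : Cirquent} {r : RuleName} {q : PTree} (h₁ : r ≠ .dupDown)
    (h₂ : r ≠ .dupUp) (hstep : unRel r q.concl C) (hv : q.Valid) (hdf : DupFree q)
    (ih : Compressible N q) : Compressible N (.un C r q) := by
  intro hN hne
  change C.poolLen ≤ N at hN
  change C ≠ emptyCirquent at hne
  have hNq := (poolLen_le_of_unRel hstep).trans hN
  have hweight : (PTree.un C r q).weight = r.weight + q.weight := rfl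
  rcases unRel_exchEquiv_or_one_le_weight hstep h₁ h₂ with ⟨hr, hCq⟩ | hr
  · have hq : q.concl ≠ emptyCirquent := fun hq => hne (hq ▸ hCq).eq_empty
    obtain ⟨R, hvR, hdfR, hqR, hR⟩ := ih hNq hq
    exact ⟨R, hvR, hdfR, hCq.trans hqR, by rw [hweight, hr, zero_add]; exact hR⟩
  · have hstepC := Extends.of_unRel hstep h₁ h₂
    by_cases hq : q.concl = emptyCirquent
    · have := Nat.mul_le_mul_left (2 * (4 * N ^ 2 + 2)) (show 1 ≤ r.weight + q.weight by omega)
      obtain ⟨R, hvR, hdfR, hcR, hR⟩ := hstepC (.leaf emptyCirquent .emptyAx) (.inl ⟨rfl, rfl⟩)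
        (dupFree_leaf _ (by decide) (by decide)) hq.symm
      refine ⟨R, hvR, hdfR, hcR ▸ .refl C, ?_⟩
      simp only [PTree.nodes] at hR
      rw [hweight]
      omega
    · obtain ⟨R, hvR, hdfR, hcR, hR⟩ := ih.exists_proof hv hdf hNq hq
      obtain ⟨R', hvR', hdfR', hcR', hR'⟩ := hstepC R hvR hdfR hcR
      refine ⟨R', hvR', hdfR', hcR' ▸ .refl C, ?_⟩
      have := Nat.mul_le_mul_left (2 * (4 * N ^ 2 + 2)) hr
      rw [hweight, Nat.mul_add]
      omega

lemma compressible_mix {N : ℕ} {C : Cirquent} {q₁ q₂ : PTree}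
    (hmix : MixStep q₁.concl q₂.concl C) (hv₁ : q₁.Valid) (hdf₁ : DupFree q₁) (hv₂ : q₂.Valid)
    (hdf₂ : DupFree q₂) (ih₁ : Compressible N q₁) (ih₂ : Compressible N q₂) :
    Compressible N (.bin C .mix q₁ q₂) := by
  intro hN hne
  change C.poolLen ≤ N at hN
  change C ≠ emptyCirquent at hne
  have hweight : (PTree.bin C .mix q₁ q₂).weight = q₁.weight + q₂.weight := by
    simp [PTree.weight, RuleName.weight]
  have hN₁ : q₁.concl.poolLen ≤ N := by have := hmix.poolLen_eq; omega
  have hN₂ : q₂.concl.poolLen ≤ N := by have := hmix.poolLen_eq; omega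
  by_cases he₁ : q₁.concl = emptyCirquent
  · obtain rfl := (he₁ ▸ hmix).eq_of_empty_left
    obtain ⟨R, hvR, hdfR, hR, hnR⟩ := ih₂ hN hne
    refine ⟨R, hvR, hdfR, hR, hnR.trans ?_⟩
    rw [hweight]; exact Nat.mul_le_mul_left _ (Nat.le_add_left _ _)
  by_cases he₂ : q₂.concl = emptyCirquent
  · obtain rfl := (he₂ ▸ hmix).eq_of_empty_right
    obtain ⟨R, hvR, hdfR, hR, hnR⟩ := ih₁ hN hne
    refine ⟨R, hvR, hdfR, hR, hnR.trans ?_⟩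
    rw [hweight]; exact Nat.mul_le_mul_left _ (Nat.le_add_right _ _)
  obtain ⟨R₁, hvR₁, hdfR₁, hcR₁, hnR₁⟩ := ih₁.exists_proof hv₁ hdf₁ hN₁ he₁
  obtain ⟨R₂, hvR₂, hdfR₂, hcR₂, hnR₂⟩ := ih₂.exists_proof hv₂ hdf₂ hN₂ he₂
  refine ⟨.bin C .mix R₁ R₂, ⟨hvR₁, hvR₂, rfl, hcR₁ ▸ hcR₂ ▸ hmix⟩,
    dupFree_bin_iff.mpr ⟨hdfR₁, hdfR₂⟩, .refl C, ?_⟩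
  rw [hweight, Nat.mul_add]
  simp only [PTree.nodes]
  omega

theorem compressible {N : ℕ} {p : PTree} (hv : p.Valid) (hdf : DupFree p) :
    Compressible N p := by
  refine PTree.dupFree_induction p hv hdf ?_ (fun F _ _ => ?_)
    (fun C r q h₁ h₂ hstep hq hdfq ih => compressible_un h₁ h₂ hstep hq hdfq ih)
    (fun C q₁ q₂ hmix hv₁ hdf₁ hv₂ hdf₂ ih₁ ih₂ => compressible_mix hmix hv₁ hdf₁ hv₂ hdf₂ ih₁ ih₂)
  · exact fun _ hne => absurd rfl hne
  · refine ⟨.leaf (idCirquent F) .idAx, .inr ⟨rfl, F, rfl⟩, dupFree_leaf _ (by decide) (by decide),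
      .refl _, ?_⟩
    simp only [PTree.nodes, PTree.weight, RuleName.weight]
    omega

end CirquentCalc

open CirquentCalc

/-- There is a constant c such that every formula F provable in CL5⁻
of length k has a CL5⁻ proof using at most c·k⁶ rule applications. -/
theorem cl5m_polysize_rule_applications :
    ∃ c : ℕ, ∀ F : Fml, ProvesCL5m F →
      ∃ p : PTree, p.Valid ∧ DupFree p ∧ p.concl = fmlCirquent F ∧
        p.nodes ≤ c * F.len ^ 6 := by
  refine ⟨20, fun F ⟨p, hv, hdf, hc⟩ => ?_⟩
  set k := F.len
  have hk : 1 ≤ k := F.one_le_len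
  have hpoolLen : p.concl.poolLen = k := by simp [hc, Cirquent.poolLen, fmlCirquent, k]
  have hweight := p.weight_le_potential hv hdf
  rw [hc, show (fmlCirquent F).potential = 1 + k ^ 3 by
    simp [Cirquent.potential, Cirquent.arcs, Cirquent.poolLen, fmlCirquent, k]] at hweight
  obtain ⟨q, hvq, hdfq, hpq, hq⟩ := compressible (N := k) hv hdf hpoolLen.le
    (by simp [hc, fmlCirquent, emptyCirquent])
  rw [hc] at hpq
  obtain ⟨p', hv', hdf', hc', hn'⟩ := hpq.extends (by simp [Cirquent.WellIndexed, fmlCirquent])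
    q hvq hdfq rfl
  refine ⟨p', hv', hdf', hc', ?_⟩
  simp only [fmlCirquent, List.length_singleton] at hn'
  have hqk := Nat.mul_le_mul_left (2 * (4 * k ^ 2 + 2)) hweight
  have hpow : ∀ i ≤ 6, k ^ i ≤ k ^ 6 := fun i hi => Nat.pow_le_pow_right hk hi
  nlinarith [hpow 0 (by norm_num), hpow 2 (by norm_num), hpow 3 (by norm_num),
    hpow 5 (by norm_num)]
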